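/- arXiv:2006.13881 — 5 statements merged into one kernel-verified Lean document; each statement's English description precedes it below -/
import Mathlib

section
/- Let P be a maximal ideal of R = K[x] which is a minimal prime of an ideal I, with P of dimension zero (i.e. maximal), and let Q be the P-primary component of I. Write I = Q ∩ I' where P is not an associated prime of I'. Then the local dual space of I' at P is zero; consequently, D_P[I] = D_P[Q]. -/
/-!
Read `D = ∑ c_α ∂^α` as the polynomial `∑ c_α ξ^α` in commuting symbols. The Leibniz rule
`∂^α (xᵢ g) = xᵢ ∂^α g + αᵢ ∂^(α - eᵢ) g` becomes `⟨D, xᵢ g⟩ = x̄ᵢ ⟨D, g⟩ + ⟨∂D/∂ξᵢ, g⟩`, so every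
local dual space `D_P[J]` is stable under the `∂/∂ξᵢ`. In characteristic zero a nonzero element of
`D_P[J]` can therefore be differentiated down to a nonzero constant `c`, and if some `f ∈ J` lies
outside `P` then `⟨c, f⟩ = c f̄ ≠ 0`. Here `I' ⊄ P`: otherwise `P`, minimal over `I ⊆ I'`, would be
minimal over `I'` and hence associated to `I'`. So `D_P[I'] = 0`.

The same rule yields the right action `D · q` of `R`. For `D ∈ D_P[Q ∩ I']` and `q ∈ Q` we get
`D · q ∈ D_P[I'] = 0`, hence `⟨D, q⟩ = ⟨D · q, 1⟩ = 0`.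
-/

open MvPolynomial

/-- The differential operator `∂^α` on `K[x₁,…,xₙ]`. -/
noncomputable def diffOp {K : Type*} [CommRing K] {n : ℕ} (α : Fin n →₀ ℕ) :
    Module.End K (MvPolynomial (Fin n) K) :=
  (List.ofFn (fun i : Fin n => ((pderiv i : Derivation K (MvPolynomial (Fin n) K)
      (MvPolynomial (Fin n) K)).toLinearMap ^ (α i)))).prod

/-- The pairing `⟨D, f⟩_{κ(P)}` for `D = ∑ c_α ∂^α ∈ W_{κ(P)} = κ(P)[∂]` (represented as a
finitely supported function from `∂`-monomials to `κ(P) = R/P`) and `f ∈ R`: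
`∑ c_α · π(∂^α • f)`, where `π : R → R/P` is the quotient map. -/
noncomputable def lpair {K : Type*} [Field K] {n : ℕ}
    (P : Ideal (MvPolynomial (Fin n) K))
    (D : (Fin n →₀ ℕ) →₀ (MvPolynomial (Fin n) K ⧸ P))
    (f : MvPolynomial (Fin n) K) : MvPolynomial (Fin n) K ⧸ P :=
  D.sum fun α c => c * Ideal.Quotient.mk P (diffOp α f)

/-- The local dual space `D_P[J] = {D ∈ W_{κ(P)} : ⟨D, f⟩_{κ(P)} = 0 ∀ f ∈ J}`. -/
def localDual {K : Type*} [Field K] {n : ℕ}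
    (P J : Ideal (MvPolynomial (Fin n) K)) :
    Set ((Fin n →₀ ℕ) →₀ (MvPolynomial (Fin n) K ⧸ P)) :=
  {D | ∀ f ∈ J, lpair P D f = 0}

theorem List.prod_ofFn_mul_eq_of_commute {A : Type*} [Semiring A] :
    ∀ {m : ℕ} (f : Fin m → A) (M c : A) (k : ℕ) (i : Fin m),
      (∀ j ≠ i, Commute (f j) M) → f i * M = M * f i + k • c →
      (ofFn f).prod * M = M * (ofFn f).prod + k • (ofFn (Function.update f i c)).prod
  | 0, _, _, _, _, i, _, _ => i.elim0
  | m + 1, f, M, c, k, i, hcomm, hc => by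
    rw [ofFn_succ, ofFn_succ, prod_cons, prod_cons]
    cases i using Fin.cases with
    | zero =>
      have hrest : Commute (ofFn fun j : Fin m => f j.succ).prod M :=
        Commute.list_prod_left _ _ fun x hx => by
          obtain ⟨j, rfl⟩ := mem_ofFn.mp hx
          exact hcomm j.succ (Fin.succ_ne_zero j)
      simp only [Function.update_self, Function.update_of_ne (Fin.succ_ne_zero _)]
      rw [mul_assoc, hrest.eq, ← mul_assoc, hc, add_mul, smul_mul_assoc, mul_assoc]
    | succ i =>
      have ih := prod_ofFn_mul_eq_of_commute (fun j => f j.succ) M c k i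
        (fun j hj => hcomm j.succ (Fin.succ_injective _ |>.ne hj)) hc
      have hf0 : Commute (f 0) M := hcomm 0 (Fin.succ_ne_zero i).symm
      have htail : (fun j : Fin m => Function.update f i.succ c j.succ)
          = Function.update (fun j => f j.succ) i c :=
        Function.update_comp_eq_of_injective f (Fin.succ_injective m) i c
      rw [Function.update_of_ne (Fin.succ_ne_zero i).symm, htail, mul_assoc, ih, mul_add,
        ← mul_assoc, hf0.eq, mul_assoc, mul_smul_comm]

section Leibniz

variable {K σ : Type*} [CommRing K]

theorem pderiv_commute_mulLeft_X {i j : σ} (hij : j ≠ i) :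
    Commute (pderiv (R := K) j).toLinearMap (LinearMap.mulLeft K (X i)) :=
  LinearMap.ext fun g => by simp [pderiv_X_of_ne hij.symm]

theorem pderiv_mul_mulLeft_X (i : σ) :
    (pderiv (R := K) i).toLinearMap * LinearMap.mulLeft K (X i) =
      LinearMap.mulLeft K (X i) * (pderiv i).toLinearMap + 1 :=
  LinearMap.ext fun g => by simp [add_comm]

theorem pderiv_pow_succ_mul_mulLeft_X (i : σ) (k : ℕ) :
    (pderiv (R := K) i).toLinearMap ^ (k + 1) * LinearMap.mulLeft K (X i) =
      LinearMap.mulLeft K (X i) * (pderiv i).toLinearMap ^ (k + 1) +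
        (k + 1) • (pderiv i).toLinearMap ^ k := by
  induction k with
  | zero => simpa using pderiv_mul_mulLeft_X i
  | succ k ih =>
    rw [pow_succ', mul_assoc, ih, mul_add, ← mul_assoc, pderiv_mul_mulLeft_X, add_mul, one_mul,
      mul_assoc, ← pow_succ', mul_smul_comm, ← pow_succ', add_assoc, ← succ_nsmul']

variable {n : ℕ}

theorem diffOp_zero :
    diffOp (0 : Fin n →₀ ℕ) = (1 : Module.End K (MvPolynomial (Fin n) K)) := by
  simp [diffOp]

theorem diffOp_mul_mulLeft_X (α : Fin n →₀ ℕ) (i : Fin n) :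
    diffOp α * LinearMap.mulLeft K (X i) =
      LinearMap.mulLeft K (X i) * diffOp α + α i • diffOp (α - Finsupp.single i 1) := by
  have hupd : Function.update (fun j => (pderiv (R := K) j).toLinearMap ^ α j) i
      ((pderiv i).toLinearMap ^ (α i - 1)) =
        fun j => (pderiv j).toLinearMap ^ (α - Finsupp.single i 1 : Fin n →₀ ℕ) j := by
    funext j
    rcases eq_or_ne j i with rfl | hji
    · simp
    · simp [hji]
  unfold diffOp
  rw [← hupd]
  refine List.prod_ofFn_mul_eq_of_commute _ _ _ _ i
    (fun j hj => (pderiv_commute_mulLeft_X hj).pow_left _) ?_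
  rcases α i with _ | k
  · simp
  · exact pderiv_pow_succ_mul_mulLeft_X i k

theorem diffOp_X_mul (α : Fin n →₀ ℕ) (i : Fin n) (g : MvPolynomial (Fin n) K) :
    diffOp α (X i * g) = X i * diffOp α g + α i • diffOp (α - Finsupp.single i 1) g :=
  LinearMap.congr_fun (diffOp_mul_mulLeft_X α i) g

end Leibniz

section SymbolPDeriv

variable {k σ : Type*} [CommRing k]

/-- `∂D/∂ξᵢ` for `D = ∑ c_α ∂^α` read as `∑ c_α ξ^α`; in the Weyl algebra this is the
commutator `[D, xᵢ]`. -/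
noncomputable def symbolPDeriv (i : σ) (D : (σ →₀ ℕ) →₀ k) : (σ →₀ ℕ) →₀ k :=
  AddMonoidAlgebra.coeff (pderiv i (AddMonoidAlgebra.ofCoeff D : MvPolynomial σ k))

theorem symbolPDeriv_apply (i : σ) (D : (σ →₀ ℕ) →₀ k) (β : σ →₀ ℕ) :
    symbolPDeriv i D β = D (β + Finsupp.single i 1) * (β i + 1) :=
  coeff_pderiv _ _

theorem symbolPDeriv_add (i : σ) (D E : (σ →₀ ℕ) →₀ k) :
    symbolPDeriv i (D + E) = symbolPDeriv i D + symbolPDeriv i E := by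
  simp [symbolPDeriv]

theorem symbolPDeriv_single (i : σ) (α : σ →₀ ℕ) (c : k) :
    symbolPDeriv i (Finsupp.single α c) = Finsupp.single (α - Finsupp.single i 1) (c * α i) := by
  rw [symbolPDeriv, AddMonoidAlgebra.ofCoeff_single, single_eq_monomial, pderiv_monomial]
  rfl

variable [IsDomain k] [CharZero k]

theorem eq_single_zero_of_forall_symbolPDeriv_eq_zero {D : (σ →₀ ℕ) →₀ k}
    (h : ∀ i, symbolPDeriv i D = 0) : D = Finsupp.single 0 (D 0) := by
  ext β
  rcases eq_or_ne β 0 with rfl | hβ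
  · simp
  obtain ⟨i, hi⟩ : ∃ i, β i ≠ 0 := by simpa [Finsupp.ext_iff] using hβ
  have hcoeff := symbolPDeriv_apply i D (β - Finsupp.single i 1)
  rw [h i, tsub_add_cancel_of_le (Finsupp.single_le_iff.mpr (Nat.one_le_iff_ne_zero.mpr hi))]
    at hcoeff
  rw [Finsupp.single_eq_of_ne hβ]
  exact (mul_eq_zero.mp hcoeff.symm).resolve_right (Nat.cast_add_one_ne_zero _)

theorem eq_zero_of_symbolPDeriv_stable {S : Set ((σ →₀ ℕ) →₀ k)}
    (hS : ∀ D ∈ S, ∀ i, symbolPDeriv i D ∈ S) (hconst : ∀ c, Finsupp.single 0 c ∈ S → c = 0)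
    {D : (σ →₀ ℕ) →₀ k} (hD : D ∈ S) : D = 0 := by
  suffices ∀ d, ∀ D ∈ S, (∀ β ∈ D.support, β.degree < d) → D = 0 from
    this _ D hD fun β hβ => Nat.lt_succ_of_le (Finset.le_sup (f := Finsupp.degree) hβ)
  intro d
  induction d with
  | zero =>
    exact fun D _ hdeg => Finsupp.support_eq_empty.mp
      (Finset.eq_empty_of_forall_notMem fun β hβ => Nat.not_lt_zero _ (hdeg β hβ))
  | succ d ih =>
    intro D hD hdeg
    have hderiv : ∀ i, symbolPDeriv i D = 0 := fun i => ih _ (hS D hD i) fun β hβ => by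
      rw [Finsupp.mem_support_iff, symbolPDeriv_apply] at hβ
      have := hdeg _ (Finsupp.mem_support_iff.mpr (left_ne_zero_of_mul hβ))
      rw [map_add, Finsupp.degree_single] at this
      omega
    rw [eq_single_zero_of_forall_symbolPDeriv_eq_zero hderiv] at hD ⊢
    rw [hconst _ hD, Finsupp.single_zero]

end SymbolPDeriv

theorem Ideal.not_le_of_mem_minimalPrimes_of_notMem_associatedPrimes {R : Type*} [CommRing R]
    [IsNoetherianRing R] {I J P : Ideal R} (hIJ : I ≤ J) (hP : P ∈ I.minimalPrimes)
    (hass : P ∉ associatedPrimes R (R ⧸ J)) : ¬ J ≤ P := by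
  intro hJP
  refine hass
    (Module.associatedPrimes.minimalPrimes_annihilator_subset_associatedPrimes R (R ⧸ J) ?_)
  rw [Ideal.annihilator_quotient]
  exact ⟨⟨hP.1.1, hJP⟩, fun q hq hqP => hP.2 ⟨hq.1, hIJ.trans hq.2⟩ hqP⟩

section Pairing

variable {K : Type*} [Field K] {n : ℕ} (P : Ideal (MvPolynomial (Fin n) K))

theorem lpair_zero_left (f : MvPolynomial (Fin n) K) : lpair P 0 f = 0 :=
  Finsupp.sum_zero_index

theorem lpair_add_left (D E : (Fin n →₀ ℕ) →₀ (MvPolynomial (Fin n) K ⧸ P))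
    (f : MvPolynomial (Fin n) K) : lpair P (D + E) f = lpair P D f + lpair P E f :=
  Finsupp.sum_add_index' (fun _ => zero_mul _) fun _ _ _ => add_mul _ _ _

theorem lpair_single (α : Fin n →₀ ℕ) (c : MvPolynomial (Fin n) K ⧸ P)
    (f : MvPolynomial (Fin n) K) :
    lpair P (Finsupp.single α c) f = c * Ideal.Quotient.mk P (diffOp α f) :=
  Finsupp.sum_single_index (zero_mul _)

theorem lpair_smul_left (c : MvPolynomial (Fin n) K ⧸ P)
    (D : (Fin n →₀ ℕ) →₀ (MvPolynomial (Fin n) K ⧸ P)) (f : MvPolynomial (Fin n) K) :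
    lpair P (c • D) f = c * lpair P D f := by
  rw [lpair, lpair, Finsupp.sum_smul_index' fun _ => zero_mul _, Finsupp.mul_sum]
  simp only [smul_eq_mul, mul_assoc]

theorem lpair_add_right (D : (Fin n →₀ ℕ) →₀ (MvPolynomial (Fin n) K ⧸ P))
    (f g : MvPolynomial (Fin n) K) : lpair P D (f + g) = lpair P D f + lpair P D g := by
  simp only [lpair, map_add, mul_add, Finsupp.sum_add]

theorem lpair_C_mul (D : (Fin n →₀ ℕ) →₀ (MvPolynomial (Fin n) K ⧸ P)) (a : K)
    (g : MvPolynomial (Fin n) K) :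
    lpair P D (C a * g) = Ideal.Quotient.mk P (C a) * lpair P D g := by
  have hdiff (α : Fin n →₀ ℕ) : diffOp α (C a * g) = C a * diffOp α g := by
    rw [← smul_eq_C_mul, map_smul, smul_eq_C_mul]
  simp only [lpair, hdiff, map_mul, Finsupp.mul_sum]
  exact Finsupp.sum_congr fun _ _ => mul_left_comm _ _ _

theorem lpair_X_mul (D : (Fin n →₀ ℕ) →₀ (MvPolynomial (Fin n) K ⧸ P)) (i : Fin n)
    (g : MvPolynomial (Fin n) K) :
    lpair P D (X i * g) =
      Ideal.Quotient.mk P (X i) * lpair P D g + lpair P (symbolPDeriv i D) g := by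
  induction D using Finsupp.induction_linear with
  | zero => simp [lpair_zero_left, symbolPDeriv]
  | add D E hD hE =>
    rw [lpair_add_left, lpair_add_left, symbolPDeriv_add, lpair_add_left, hD, hE]
    ring
  | single α c =>
    rw [lpair_single, lpair_single, symbolPDeriv_single, lpair_single, diffOp_X_mul, map_add,
      map_mul, map_nsmul, nsmul_eq_mul]
    ring

theorem symbolPDeriv_mem_localDual {J : Ideal (MvPolynomial (Fin n) K)}
    {D : (Fin n →₀ ℕ) →₀ (MvPolynomial (Fin n) K ⧸ P)} (hD : D ∈ localDual P J) (i : Fin n) :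
    symbolPDeriv i D ∈ localDual P J := fun f hf => by
  have h := lpair_X_mul P D i f
  rw [hD _ (J.mul_mem_left _ hf), hD f hf, mul_zero, zero_add] at h
  exact h.symm

theorem localDual_eq_zero_of_not_le [CharZero K] [P.IsPrime] {J : Ideal (MvPolynomial (Fin n) K)}
    (hJP : ¬ J ≤ P) : localDual P J = {0} := by
  have : CharZero (MvPolynomial (Fin n) K ⧸ P) :=
    charZero_of_injective_algebraMap (algebraMap K _).injective
  obtain ⟨f, hfJ, hfP⟩ := SetLike.not_le_iff_exists.mp hJP
  refine Set.eq_singleton_iff_unique_mem.mpr ⟨fun g _ => lpair_zero_left P g, fun D hD => ?_⟩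
  refine eq_zero_of_symbolPDeriv_stable (fun E hE i => symbolPDeriv_mem_localDual P hE i)
    (fun c hc => ?_) hD
  have h := hc f hfJ
  rw [lpair_single, diffOp_zero, Module.End.one_apply] at h
  exact (mul_eq_zero.mp h).resolve_right (by rwa [Ideal.Quotient.eq_zero_iff_mem])

theorem exists_lpair_eq_lpair_mul (q : MvPolynomial (Fin n) K) :
    ∀ D : (Fin n →₀ ℕ) →₀ (MvPolynomial (Fin n) K ⧸ P),
      ∃ E, ∀ g, lpair P E g = lpair P D (q * g) := by
  induction q using MvPolynomial.induction_on with
  | C a => exact fun D => ⟨Ideal.Quotient.mk P (C a) • D, fun g => by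
      rw [lpair_smul_left, lpair_C_mul]⟩
  | add p q hp hq =>
    intro D
    obtain ⟨E₁, hE₁⟩ := hp D
    obtain ⟨E₂, hE₂⟩ := hq D
    exact ⟨E₁ + E₂, fun g => by rw [lpair_add_left, hE₁, hE₂, add_mul, lpair_add_right]⟩
  | mul_X p i hp =>
    intro D
    obtain ⟨E, hE⟩ := hp D
    refine ⟨Ideal.Quotient.mk P (X i) • E + symbolPDeriv i E, fun g => ?_⟩
    rw [lpair_add_left, lpair_smul_left, mul_assoc, ← hE, lpair_X_mul]

theorem localDual_inf_eq_of_localDual_eq_zero {Q I' : Ideal (MvPolynomial (Fin n) K)}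
    (h : localDual P I' = {0}) : localDual P (Q ⊓ I') = localDual P Q := by
  refine Set.Subset.antisymm (fun D hD q hq => ?_) fun D hD f hf => hD f hf.1
  obtain ⟨E, hE⟩ := exists_lpair_eq_lpair_mul P q D
  have hE0 : E ∈ localDual P I' := fun g hg =>
    (hE g).trans (hD _ ⟨Q.mul_mem_right g hq, I'.mul_mem_left q hg⟩)
  rw [h, Set.mem_singleton_iff] at hE0
  simpa [hE0, lpair_zero_left] using (hE 1).symm

end Pairing

theorem localDual_primary_component_general
    (K : Type*) [Field K] [CharZero K] (n : ℕ)
    (I Q I' P : Ideal (MvPolynomial (Fin n) K))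
    (hPmin : P ∈ I.minimalPrimes)
    (hdec : I = Q ⊓ I')
    (hass : P ∉ associatedPrimes (MvPolynomial (Fin n) K)
      (MvPolynomial (Fin n) K ⧸ I')) :
    localDual P I' = {0} ∧ localDual P I = localDual P Q := by
  subst hdec
  have : P.IsPrime := hPmin.1.1
  have hI' : localDual P I' = {0} := localDual_eq_zero_of_not_le P
    (Ideal.not_le_of_mem_minimalPrimes_of_notMem_associatedPrimes inf_le_right hPmin hass)
  exact ⟨hI', localDual_inf_eq_of_localDual_eq_zero P hI'⟩

/-- Let `P` be a maximal ideal of `R = K[x₁,…,xₙ]` which is a minimal prime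
of `I`, and `Q` the `P`-primary component of `I`, writing `I = Q ∩ I'` where `P` is not an
associated prime of `I'`. Then `D_P[I'] = 0`, and consequently `D_P[I] = D_P[Q]`. -/
theorem localDual_primary_component
    (K : Type*) [Field K] [CharZero K] (n : ℕ)
    (I Q I' P : Ideal (MvPolynomial (Fin n) K))
    (hPmax : P.IsMaximal) (hPmin : P ∈ I.minimalPrimes)
    (hQ : Q.IsPrimary) (hQrad : Q.radical = P)
    (hdec : I = Q ⊓ I')
    (hass : P ∉ associatedPrimes (MvPolynomial (Fin n) K)
      (MvPolynomial (Fin n) K ⧸ I')) :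
    localDual P I' = {0} ∧ localDual P I = localDual P Q :=
  localDual_primary_component_general K n I Q I' P hPmin hdec hass
end

section
/- Let P ⊆ K[x_1,...,x_n] be a maximal ideal over a field K of characteristic 0, and ℓ a linear form separating the points of V(P) over the algebraic closure of K. Then there exist univariate polynomials g, g_1, ..., g_n over K such that P = (g(ℓ), x_1 - g_1(ℓ), ..., x_n - g_n(ℓ)), with deg(g_i) < deg(g) = dim_K(R/P) for all i. -/
/-!
By the Nullstellensatz `L = R ⧸ P` is a finite field extension of `K`. A `K`-embedding
`φ : L → K̄` is determined by the point `(φ x₁, …, φ xₙ)` of `V(P)`, and `φ (ℓ mod P)` is the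
value of `ℓ` at that point; so `t = ℓ mod P` takes distinct values under distinct embeddings,
which for the separable extension `L / K` means that `t` is a primitive element. Hence
`deg (minpoly t) = [L : K]` and each `xᵢ mod P` is `gᵢ(t)` with `deg gᵢ < deg (minpoly t)`.
Modulo the `xᵢ - gᵢ(ℓ)` every `f` is a polynomial `F(ℓ)`, and `f ∈ P` exactly when `F(t) = 0`,
i.e. when `minpoly t ∣ F`.
-/

open MvPolynomial

namespace MvPolynomial

variable {σ R : Type*} [CommRing R]

theorem sub_aeval_mem_span_X_sub (r : σ → MvPolynomial σ R) (f : MvPolynomial σ R) :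
    f - aeval r f ∈ Ideal.span (Set.range fun i => X i - r i) := by
  induction f using MvPolynomial.induction_on with
  | C a => simp
  | add p q hp hq =>
    rw [map_add, add_sub_add_comm]
    exact Ideal.add_mem _ hp hq
  | mul_X p i hp =>
    have split : p * X i - aeval r (p * X i) = p * (X i - r i) + (p - aeval r p) * r i := by
      rw [map_mul, aeval_X]; ring
    rw [split]
    exact Ideal.add_mem _ (Ideal.mul_mem_left _ _ (Ideal.subset_span ⟨i, rfl⟩))
      (Ideal.mul_mem_right _ _ hp)

theorem aeval_algHom_mk_X {A : Type*} [CommRing A] [Algebra R A] {I : Ideal (MvPolynomial σ R)}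
    (φ : MvPolynomial σ R ⧸ I →ₐ[R] A) (f : MvPolynomial σ R) :
    aeval (fun i => φ (Ideal.Quotient.mk I (X i))) f = φ (Ideal.Quotient.mk I f) :=
  (DFunLike.congr_fun (aeval_unique (φ.comp (Ideal.Quotient.mkₐ R I))) f).symm

theorem aeval_mk_X {I : Ideal (MvPolynomial σ R)} (f : MvPolynomial σ R) :
    aeval (fun i => Ideal.Quotient.mk I (X i)) f = Ideal.Quotient.mk I f :=
  aeval_algHom_mk_X (AlgHom.id R _) f

theorem injective_algHom_apply_mk_of_separating {A : Type*} [CommRing A] [Algebra R A]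
    (P : Ideal (MvPolynomial σ R)) (ℓ : MvPolynomial σ R)
    (hsep : ∀ p q : σ → A, (∀ f ∈ P, aeval p f = 0) → (∀ f ∈ P, aeval q f = 0) →
      aeval p ℓ = aeval q ℓ → p = q) :
    Function.Injective fun φ : MvPolynomial σ R ⧸ P →ₐ[R] A => φ (Ideal.Quotient.mk P ℓ) := by
  intro φ ψ hφψ
  have mem_V (χ : MvPolynomial σ R ⧸ P →ₐ[R] A) (f : MvPolynomial σ R) (hf : f ∈ P) :
      aeval (fun i => χ (Ideal.Quotient.mk P (X i))) f = 0 := by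
    rw [aeval_algHom_mk_X, Ideal.Quotient.eq_zero_iff_mem.mpr hf, map_zero]
  have same_point : (fun i => φ (Ideal.Quotient.mk P (X i))) =
      fun i => ψ (Ideal.Quotient.mk P (X i)) :=
    hsep _ _ (mem_V φ) (mem_V ψ) (by simpa only [aeval_algHom_mk_X] using hφψ)
  refine Ideal.Quotient.algHom_ext R (MvPolynomial.algHom_ext fun i => ?_)
  exact congr_fun same_point i

theorem finite_quotient_of_isMaximal {K : Type*} [Finite σ] [Field K]
    (P : Ideal (MvPolynomial σ K)) [P.IsMaximal] : Module.Finite K (MvPolynomial σ K ⧸ P) :=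
  let := Ideal.Quotient.field P
  haveI : Algebra.FiniteType K (MvPolynomial σ K ⧸ P) :=
    .of_surjective (Ideal.Quotient.mkₐ K P) (Ideal.Quotient.mkₐ_surjective K P)
  finite_of_finite_type_of_isJacobsonRing K _

end MvPolynomial

theorem Ideal.eq_span_minpoly_of_aeval_mk_eq_mk_X {σ K : Type*} [Field K]
    (P : Ideal (MvPolynomial σ K)) (ℓ : MvPolynomial σ K) (g : σ → Polynomial K)
    (hg : ∀ i, Polynomial.aeval (Ideal.Quotient.mk P ℓ) (g i) = Ideal.Quotient.mk P (X i)) :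
    P = Ideal.span ({Polynomial.aeval ℓ (minpoly K (Ideal.Quotient.mk P ℓ))} ∪
      Set.range fun i => X i - Polynomial.aeval ℓ (g i)) := by
  have mk_aeval (q : Polynomial K) :
      Ideal.Quotient.mk P (Polynomial.aeval ℓ q) = Polynomial.aeval (Ideal.Quotient.mk P ℓ) q :=
    (Polynomial.aeval_algHom_apply (Ideal.Quotient.mkₐ K P) ℓ q).symm
  apply le_antisymm
  · intro f hf
    set F : Polynomial K := aeval g f
    have F_root : Polynomial.aeval (Ideal.Quotient.mk P ℓ) F = 0 := by
      rw [← AlgHom.comp_apply, comp_aeval]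
      simp only [hg, aeval_mk_X, Ideal.Quotient.eq_zero_iff_mem.mpr hf]
    obtain ⟨q, hq⟩ := minpoly.dvd K _ F_root
    have reduce :
        f = (f - aeval (fun i => Polynomial.aeval ℓ (g i)) f) + Polynomial.aeval ℓ F := by
      rw [← AlgHom.comp_apply, comp_aeval, sub_add_cancel]
    rw [reduce, hq, map_mul]
    exact Ideal.add_mem _
      (Ideal.span_mono Set.subset_union_right (sub_aeval_mem_span_X_sub _ f))
      (Ideal.mul_mem_right _ _ (Ideal.subset_span (Set.mem_union_left _ rfl)))
  · rw [Ideal.span_le]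
    rintro _ (rfl | ⟨i, rfl⟩) <;> rw [SetLike.mem_coe, ← Ideal.Quotient.eq_zero_iff_mem]
    · rw [mk_aeval, minpoly.aeval]
    · rw [map_sub, mk_aeval, hg, sub_self]

theorem exists_degree_lt_minpoly_aeval_eq {K L : Type*} [Field K] [CommRing L] [Algebra K L]
    {x y : L} (hx : IsIntegral K x) (hy : y ∈ Algebra.adjoin K {x}) :
    ∃ p : Polynomial K, p.degree < (minpoly K x).degree ∧ Polynomial.aeval x p = y := by
  rw [Algebra.adjoin_singleton_eq_range_aeval] at hy
  obtain ⟨p, rfl⟩ := hy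
  exact ⟨p %ₘ minpoly K x, Polynomial.degree_modByMonic_lt p (minpoly.monic hx),
    minpoly.aeval_modByMonic_minpoly p x⟩

theorem shape_lemma_general
    (K : Type*) [Field K] [CharZero K] (n : ℕ)
    (P : Ideal (MvPolynomial (Fin n) K)) (hP : P.IsMaximal)
    (ℓ : MvPolynomial (Fin n) K)
    (hsep : ∀ p q : Fin n → AlgebraicClosure K,
      (∀ f ∈ P, aeval p f = 0) → (∀ f ∈ P, aeval q f = 0) →
      aeval p ℓ = aeval q ℓ → p = q) :
    ∃ (g : Polynomial K) (g' : Fin n → Polynomial K),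
      P = Ideal.span ({Polynomial.aeval ℓ g} ∪
        Set.range (fun i : Fin n => X i - Polynomial.aeval ℓ (g' i))) ∧
      (∀ i, (g' i).degree < g.degree) ∧
      g.natDegree = Module.finrank K (MvPolynomial (Fin n) K ⧸ P) := by
  let := Ideal.Quotient.field P
  have := finite_quotient_of_isMaximal P
  set t := Ideal.Quotient.mk P ℓ
  have primitive : IntermediateField.adjoin K {t} = ⊤ :=
    (Field.primitive_element_iff_algHom_eq_of_eval' K (AlgebraicClosure K)
      (fun _ => IsAlgClosed.splits _) t).mpr (injective_algHom_apply_mk_of_separating P ℓ hsep)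
  have integral : IsIntegral K t := .of_finite K t
  have adjoin_eq_top : Algebra.adjoin K {t} = ⊤ := by
    rw [← IntermediateField.adjoin_simple_toSubalgebra_of_isAlgebraic integral.isAlgebraic,
      primitive, IntermediateField.top_toSubalgebra]
  choose g' hg'_deg hg' using fun i : Fin n =>
    exists_degree_lt_minpoly_aeval_eq integral (adjoin_eq_top ▸ Algebra.mem_top :
      Ideal.Quotient.mk P (X i) ∈ Algebra.adjoin K {t})
  exact ⟨minpoly K t, g', P.eq_span_minpoly_of_aeval_mk_eq_mk_X ℓ g' hg', hg'_deg,
    (Field.primitive_element_iff_minpoly_natDegree_eq K t).mp primitive⟩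

/-- Shape Lemma: Let `P ⊆ K[x₁,…,xₙ]` be a maximal ideal, `char K = 0`, and
`ℓ` a linear form taking distinct values at distinct points of `V(P)` over the algebraic
closure `K̄`. Then there exist univariate polynomials `g, g₁, …, gₙ` over `K` with
`P = (g(ℓ), x₁ - g₁(ℓ), …, xₙ - gₙ(ℓ))` and `deg gᵢ < deg g = dim_K (R/P)`. -/
theorem shape_lemma
    (K : Type*) [Field K] [CharZero K] (n : ℕ)
    (P : Ideal (MvPolynomial (Fin n) K)) (hP : P.IsMaximal)
    (ℓ : MvPolynomial (Fin n) K) (hℓ : ℓ.IsHomogeneous 1)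
    (hsep : ∀ p q : Fin n → AlgebraicClosure K,
      (∀ f ∈ P, aeval p f = 0) → (∀ f ∈ P, aeval q f = 0) →
      aeval p ℓ = aeval q ℓ → p = q) :
    ∃ (g : Polynomial K) (g' : Fin n → Polynomial K),
      P = Ideal.span ({Polynomial.aeval ℓ g} ∪
        Set.range (fun i : Fin n => X i - Polynomial.aeval ℓ (g' i))) ∧
      (∀ i, (g' i).degree < g.degree) ∧
      g.natDegree = Module.finrank K (MvPolynomial (Fin n) K ⧸ P) :=
  shape_lemma_general K n P hP ℓ hsep
end

section
/- Let P ⊆ K[x_1,...,x_n] be a maximal ideal with residue field κ(P) = R/P, let I ⊆ R be an ideal, and let p be a point of V(P) over κ(P) with associated maximal ideal m_p ⊆ κ(P)[x]. Then the local dual space D_P[I] equals the dual space D_{m_p}[I·κ(P)[x]] of the extended ideal, as κ(P)-vector spaces. -/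
open MvPolynomial

/-!
Extending scalars along `K → κ(P)` turns a polynomial `f ∈ R` into one whose derivatives,
evaluated at `p`, are the images in `κ(P) = R/P` of the derivatives of `f`, because evaluation
at `p` restricts to the quotient map on `R`. So for `f ∈ I` the two pairings agree. The pairing
at `p` is `κ(P)`-linear, and the extended ideal `I·κ(P)[x]` is the `κ(P)`-span of the image of
`I` (the image of `R` spans `κ(P)[x]` and is absorbed by `I`), so vanishing on `I` is the
same as vanishing on `I·κ(P)[x]`.
-/

section MapIdeal

open scoped Pointwise

variable {σ R S : Type*} [CommRing R] [CommRing S]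

theorem span_range_map_eq_top (φ : R →+* S) :
    Submodule.span S (Set.range (map φ : MvPolynomial σ R → MvPolynomial σ S)) = ⊤ := by
  refine top_unique ((basisMonomials σ S).span_eq.symm.trans_le (Submodule.span_mono ?_))
  rintro _ ⟨m, rfl⟩
  exact ⟨monomial m 1, by simp [coe_basisMonomials]⟩

theorem restrictScalars_map_map_eq_span_image (φ : R →+* S) (I : Ideal (MvPolynomial σ R)) :
    (I.map (map φ)).restrictScalars S =
      Submodule.span S (map φ '' (I : Set (MvPolynomial σ R))) := by
  have smul_image_eq : Set.range (map (σ := σ) φ) • map φ '' (I : Set (MvPolynomial σ R)) =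
      map φ '' (I : Set (MvPolynomial σ R)) := by
    refine subset_antisymm ?_ fun x hx => ⟨1, ⟨1, map_one _⟩, x, hx, one_mul x⟩
    rintro _ ⟨_, ⟨a, rfl⟩, _, ⟨b, hb, rfl⟩, rfl⟩
    exact ⟨a * b, I.mul_mem_left a hb, map_mul _ _ _⟩
  rw [Ideal.map, ← Submodule.span_smul_of_span_eq_top (span_range_map_eq_top φ), smul_image_eq]

end MapIdeal

section DiffOp

variable {n : ℕ} {R S : Type*} [CommRing R] [CommRing S]

theorem pow_pderiv_map (φ : R →+* S) (m : ℕ) (i : Fin n) (f : MvPolynomial (Fin n) R) :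
    (((pderiv i : Derivation S (MvPolynomial (Fin n) S) (MvPolynomial (Fin n) S)).toLinearMap ^ m))
      (map φ f)
      = map φ ((((pderiv i : Derivation R (MvPolynomial (Fin n) R)
        (MvPolynomial (Fin n) R)).toLinearMap ^ m)) f) := by
  induction m generalizing f with
  | zero => simp
  | succ m ih => simp only [pow_succ, Module.End.mul_apply, Derivation.coeFn_coe, pderiv_map, ih]

theorem diffOp_map (φ : R →+* S) (α : Fin n →₀ ℕ) (f : MvPolynomial (Fin n) R) :
    diffOp α (map φ f) = map φ (diffOp α f) := by
  unfold diffOp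
  rw [List.ofFn_eq_map, List.ofFn_eq_map]
  induction List.finRange n generalizing f with
  | nil => simp
  | cons i l ih =>
    simp only [List.map_cons, List.prod_cons, Module.End.mul_apply, ih, pow_pderiv_map]

/-- The pairing `(D f)(p)` whose annihilator of `J` is the dual space `D_{m_p}[J]`. -/
noncomputable def pairingAt (p : Fin n → S) (D : (Fin n →₀ ℕ) →₀ S) :
    MvPolynomial (Fin n) S →ₗ[S] S :=
  D.sum fun α c => c • ((aeval p).toLinearMap ∘ₗ diffOp α)

theorem pairingAt_apply (p : Fin n → S) (D : (Fin n →₀ ℕ) →₀ S)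
    (f : MvPolynomial (Fin n) S) :
    pairingAt p D f = D.sum fun α c => c * aeval p (diffOp α f) := by
  simp [pairingAt, LinearMap.finsupp_sum_apply]

end DiffOp

theorem pairingAt_map_eq_lpair {K : Type*} [Field K] {n : ℕ} {P : Ideal (MvPolynomial (Fin n) K)}
    {p : Fin n → (MvPolynomial (Fin n) K ⧸ P)}
    (hpev : ∀ f : MvPolynomial (Fin n) K, aeval p f = Ideal.Quotient.mk P f)
    (D : (Fin n →₀ ℕ) →₀ (MvPolynomial (Fin n) K ⧸ P)) (f : MvPolynomial (Fin n) K) :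
    pairingAt p D (map (algebraMap K (MvPolynomial (Fin n) K ⧸ P)) f) = lpair P D f := by
  rw [pairingAt_apply, lpair]
  refine Finsupp.sum_congr fun α _ => ?_
  rw [diffOp_map, ← hpev, aeval_map_algebraMap]

theorem localDual_eq_dual_at_point_general
    (K : Type*) [Field K] (n : ℕ)
    (P I : Ideal (MvPolynomial (Fin n) K))
    (p : Fin n → (MvPolynomial (Fin n) K ⧸ P))
    (hpev : ∀ f : MvPolynomial (Fin n) K, aeval p f = Ideal.Quotient.mk P f) :
    localDual P I =
      {D : (Fin n →₀ ℕ) →₀ (MvPolynomial (Fin n) K ⧸ P) |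
        ∀ f ∈ I.map (MvPolynomial.map
          (algebraMap K (MvPolynomial (Fin n) K ⧸ P))),
          (D.sum fun α c => c * aeval p (diffOp α f)) = 0} := by
  set φ := algebraMap K (MvPolynomial (Fin n) K ⧸ P)
  ext D
  calc D ∈ localDual P I
      ↔ map φ '' (I : Set (MvPolynomial (Fin n) K)) ⊆ LinearMap.ker (pairingAt p D) := by
        simp [localDual, Set.subset_def, φ, pairingAt_map_eq_lpair hpev]
    _ ↔ Submodule.span _ (map φ '' I) ≤ LinearMap.ker (pairingAt p D) := Submodule.span_le.symm
    _ ↔ ∀ f ∈ I.map (map φ), pairingAt p D f = 0 := by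
        rw [← restrictScalars_map_map_eq_span_image]; rfl
    _ ↔ _ := by simp only [pairingAt_apply, Set.mem_ofPred_eq]

/-- Let `P ⊆ R = K[x₁,…,xₙ]` be maximal with residue field `κ(P) = R/P`, `I`
an ideal of `R`, and `p ∈ V(P)(κ(P))` a point (with evaluation at `p` realizing the
identification `κ(m_p) = κ(P)`, i.e. agreeing with the quotient map on `R`). Then the
local dual space `D_P[I]` equals the classical dual space at `p` of the extension
`I·κ(P)[x]`, as subsets of `κ(P)[∂]`. -/
theorem localDual_eq_dual_at_point
    (K : Type*) [Field K] [CharZero K] (n : ℕ)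
    (P I : Ideal (MvPolynomial (Fin n) K)) (hP : P.IsMaximal)
    (p : Fin n → (MvPolynomial (Fin n) K ⧸ P))
    (hpev : ∀ f : MvPolynomial (Fin n) K, aeval p f = Ideal.Quotient.mk P f) :
    localDual P I =
      {D : (Fin n →₀ ℕ) →₀ (MvPolynomial (Fin n) K ⧸ P) |
        ∀ f ∈ I.map (MvPolynomial.map
          (algebraMap K (MvPolynomial (Fin n) K ⧸ P))),
          (D.sum fun α c => c * aeval p (diffOp α f)) = 0} :=
  localDual_eq_dual_at_point_general K n P I p hpev
end

section
/- Let A ∈ GL_n(K), φ the automorphism of R = K[x] with φ(x) = Ax, and ψ the Weyl algebra automorphism with ψ(x) = Ax, ψ(∂) = (A^{-1})^T ∂. If D_1,...,D_r ∈ W_R is a set of Noetherian operators for an ideal I ⊆ R (i.e. f ∈ I ⟺ D_i • f ∈ √I for all i), then ψ(D_1),...,ψ(D_r) is a set of Noetherian operators for φ(I). -/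
open MvPolynomial

/-- The Weyl algebra `W_R = R⟨∂₁,…,∂ₙ⟩` over `R = K[x₁,…,xₙ]`, realized as the
`K`-subalgebra of `K`-linear endomorphisms of `R` generated by the multiplication
operators `x_i` and the partial derivatives `∂_i`. -/
noncomputable def weylAlg (K : Type*) [CommRing K] (n : ℕ) :
    Subalgebra K (Module.End K (MvPolynomial (Fin n) K)) :=
  Algebra.adjoin K
    ((Set.range fun i : Fin n =>
        (LinearMap.mulLeft K (X i) : Module.End K (MvPolynomial (Fin n) K))) ∪
      (Set.range fun i : Fin n =>
        ((pderiv i : Derivation K (MvPolynomial (Fin n) K)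
          (MvPolynomial (Fin n) K)).toLinearMap)))

/-!
The substitution `φ` conjugates `∂ᵢ` into `∑ₖ (A⁻¹)ₖᵢ ∂ₖ` (chain rule) and `xᵢ` into
`φ(xᵢ)`, so `ψ` agrees with `E ↦ φ ∘ E ∘ φ⁻¹` on the generators of `W_R`, hence everywhere:
`ψ(D) • f = φ(D • φ⁻¹ f)`. Since `φ(I)` is the preimage of `I` under `φ⁻¹` and radicals commute
with preimages, `f ∈ φ(I)` and `ψ(Dᵢ) • f ∈ √φ(I)` become `φ⁻¹ f ∈ I` and `Dᵢ • φ⁻¹ f ∈ √I`.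
-/

def Derivation.conjAlgEquiv {R A : Type*} [CommSemiring R] [CommSemiring A] [Algebra R A]
    (e : A ≃ₐ[R] A) (D : Derivation R A A) : Derivation R A A where
  toLinearMap := e.toLinearMap ∘ₗ D.toLinearMap ∘ₗ e.symm.toLinearMap
  map_one_eq_zero' := by simp
  leibniz' a b := by simp

@[simp]
theorem Derivation.conjAlgEquiv_apply {R A : Type*} [CommSemiring R] [CommSemiring A] [Algebra R A]
    (e : A ≃ₐ[R] A) (D : Derivation R A A) (a : A) : D.conjAlgEquiv e a = e (D (e.symm a)) :=
  rfl

@[simp]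
theorem Derivation.finset_sum_apply {R A M ι : Type*} [CommSemiring R] [CommSemiring A]
    [Algebra R A] [AddCommMonoid M] [Module A M] [Module R M] (s : Finset ι)
    (D : ι → Derivation R A M) (a : A) : (∑ i ∈ s, D i) a = ∑ i ∈ s, D i a := by
  rw [← Derivation.coeFnAddMonoidHom_apply, map_sum, Finset.sum_apply]
  rfl

section
variable {σ R : Type*} [Fintype σ] [DecidableEq σ] [CommRing R] {A : (Matrix σ σ R)ˣ}
  {φ : MvPolynomial σ R ≃ₐ[R] MvPolynomial σ R}

theorem symm_X_eq_sum_of_apply_X (hφ : ∀ i, φ (X i) = ∑ j, A.val i j • X j) (j : σ) :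
    φ.symm (X j) = ∑ k, (A⁻¹).val j k • X k := by
  apply φ.injective
  simp only [AlgEquiv.apply_symm_apply, map_sum, map_smul, hφ, Finset.smul_sum, smul_smul]
  rw [Finset.sum_comm]
  simp only [← Finset.sum_smul, ← Matrix.mul_apply, Units.inv_mul, Matrix.one_apply, ite_smul,
    one_smul, zero_smul, Finset.sum_ite_eq, Finset.mem_univ, if_true]

theorem apply_pderiv_symm_apply_eq_sum (hφ : ∀ i, φ (X i) = ∑ j, A.val i j • X j) (i : σ)
    (f : MvPolynomial σ R) :
    φ (pderiv i (φ.symm f)) = ∑ k, (A⁻¹).val k i • pderiv k f := by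
  -- both sides are derivations, so it suffices to compare them on the variables
  have hconj : (pderiv i).conjAlgEquiv φ = ∑ k, (A⁻¹).val k i • pderiv k :=
    derivation_ext fun j => by simp [symm_X_eq_sum_of_apply_X hφ, pderiv_X, Pi.single_apply]
  simpa using DFunLike.congr_fun hconj f

end

theorem weylAlg_hom_eq_conjAlgEquiv {K : Type*} [CommRing K] {n : ℕ}
    {A : (Matrix (Fin n) (Fin n) K)ˣ}
    {φ : MvPolynomial (Fin n) K ≃ₐ[K] MvPolynomial (Fin n) K}
    (hφ : ∀ i, φ (X i) = ∑ j, A.val i j • X j)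
    {ψ : weylAlg K n →ₐ[K] Module.End K (MvPolynomial (Fin n) K)}
    (hψx : ∀ (i : Fin n)
      (h : (LinearMap.mulLeft K (X i) : Module.End K (MvPolynomial (Fin n) K)) ∈ weylAlg K n),
      ψ ⟨_, h⟩ = LinearMap.mulLeft K (φ (X i)))
    (hψd : ∀ (i : Fin n)
      (h : ((pderiv i : Derivation K (MvPolynomial (Fin n) K)
          (MvPolynomial (Fin n) K)).toLinearMap) ∈ weylAlg K n),
      ψ ⟨_, h⟩ = ∑ k, (A⁻¹).val k i •
        ((pderiv k : Derivation K (MvPolynomial (Fin n) K)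
          (MvPolynomial (Fin n) K)).toLinearMap)) :
    ψ = (φ.toLinearEquiv.conjAlgEquiv K).toAlgHom.comp (weylAlg K n).val := by
  refine AlgHom.ext_of_eq_adjoin rfl ?_
  rintro _ (⟨i, rfl⟩ | ⟨i, rfl⟩)
  · refine (hψx i _).trans (LinearMap.ext fun f => ?_)
    show φ (X i) * f = φ (X i * φ.symm f)
    simp
  · refine (hψd i _).trans (LinearMap.ext fun f => ?_)
    show _ = φ (pderiv i (φ.symm f))
    simp [apply_pderiv_symm_apply_eq_sum hφ]

theorem noetherian_operators_change_of_coordinates_general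
    (K : Type*) [Field K] (n : ℕ)
    (A : (Matrix (Fin n) (Fin n) K)ˣ)
    (φ : MvPolynomial (Fin n) K ≃ₐ[K] MvPolynomial (Fin n) K)
    (hφ : ∀ i, φ (X i) = ∑ j, A.val i j • X j)
    (ψ : weylAlg K n →ₐ[K] Module.End K (MvPolynomial (Fin n) K))
    (hψx : ∀ (i : Fin n)
      (h : (LinearMap.mulLeft K (X i) : Module.End K (MvPolynomial (Fin n) K)) ∈ weylAlg K n),
      ψ ⟨_, h⟩ = LinearMap.mulLeft K (φ (X i)))
    (hψd : ∀ (i : Fin n)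
      (h : ((pderiv i : Derivation K (MvPolynomial (Fin n) K)
          (MvPolynomial (Fin n) K)).toLinearMap) ∈ weylAlg K n),
      ψ ⟨_, h⟩ = ∑ k, (A⁻¹).val k i •
        ((pderiv k : Derivation K (MvPolynomial (Fin n) K)
          (MvPolynomial (Fin n) K)).toLinearMap))
    (I : Ideal (MvPolynomial (Fin n) K))
    {ι : Type*} (D : ι → weylAlg K n)
    (hNoeth : ∀ f : MvPolynomial (Fin n) K,
      f ∈ I ↔ ∀ i, ((D i : Module.End K (MvPolynomial (Fin n) K)) f) ∈ I.radical) :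
    ∀ f : MvPolynomial (Fin n) K,
      f ∈ I.map φ ↔ ∀ i, (ψ (D i)) f ∈ (I.map φ).radical := by
  intro f
  have hmap : I.map φ = I.comap φ.symm := Ideal.map_comap_of_equiv φ.toRingEquiv
  rw [hmap, ← Ideal.comap_radical, weylAlg_hom_eq_conjAlgEquiv hφ hψx hψd]
  simpa using hNoeth (φ.symm f)

/-- Let `A ∈ GLₙ(K)`, `φ` the automorphism of `R = K[x]` with `φ(x) = Ax`,
and `ψ` the Weyl algebra map with `ψ(x) = Ax`, `ψ(∂) = (A⁻¹)ᵀ ∂`. If `D₁,…,D_r ∈ W_R` is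
a set of Noetherian operators for an ideal `I ⊆ R` (i.e. `f ∈ I ⟺ ∀ i, D_i • f ∈ √I`),
then `ψ(D₁),…,ψ(D_r)` is a set of Noetherian operators for `φ(I)`. -/
theorem noetherian_operators_change_of_coordinates
    (K : Type*) [Field K] [CharZero K] (n : ℕ)
    (A : (Matrix (Fin n) (Fin n) K)ˣ)
    (φ : MvPolynomial (Fin n) K ≃ₐ[K] MvPolynomial (Fin n) K)
    (hφ : ∀ i, φ (X i) = ∑ j, A.val i j • X j)
    (ψ : weylAlg K n →ₐ[K] Module.End K (MvPolynomial (Fin n) K))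
    (hψx : ∀ (i : Fin n)
      (h : (LinearMap.mulLeft K (X i) : Module.End K (MvPolynomial (Fin n) K)) ∈ weylAlg K n),
      ψ ⟨_, h⟩ = LinearMap.mulLeft K (φ (X i)))
    (hψd : ∀ (i : Fin n)
      (h : ((pderiv i : Derivation K (MvPolynomial (Fin n) K)
          (MvPolynomial (Fin n) K)).toLinearMap) ∈ weylAlg K n),
      ψ ⟨_, h⟩ = ∑ k, (A⁻¹).val k i •
        ((pderiv k : Derivation K (MvPolynomial (Fin n) K)
          (MvPolynomial (Fin n) K)).toLinearMap))
    (I : Ideal (MvPolynomial (Fin n) K))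
    {ι : Type*} (D : ι → weylAlg K n)
    (hNoeth : ∀ f : MvPolynomial (Fin n) K,
      f ∈ I ↔ ∀ i, ((D i : Module.End K (MvPolynomial (Fin n) K)) f) ∈ I.radical) :
    ∀ f : MvPolynomial (Fin n) K,
      f ∈ I.map φ ↔ ∀ i, (ψ (D i)) f ∈ (I.map φ).radical :=
  noetherian_operators_change_of_coordinates_general K n A φ hφ ψ hψx hψd I D hNoeth
end

section
/- Let I be an unmixed ideal with minimal primary decomposition I = q_1 ∩ ... ∩ q_r (all √q_i minimal, pairwise incomparable), and for each i let N_i be a set of Noetherian operators for q_i. For each D ∈ ⋃_i N_i choose h_D ∈ (⋂_{j : D ∉ N_j} √q_j) \ (⋃_{i : D ∈ N_i} √q_i) (such h_D exists by prime avoidance). Then N = {h_D D : D ∈ ⋃_i N_i} is a set of Noetherian operators for I: for f ∈ R, f ∈ I if and only if h_D D • f ∈ √I for every D. -/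
open MvPolynomial

/-- The action `D • f = ∑ c_α (∂^α • f)` of a differential operator `D = ∑ c_α ∂^α ∈ W_R`
with polynomial coefficients. -/
noncomputable def wAct {K : Type*} [CommRing K] {n : ℕ}
    (D : (Fin n →₀ ℕ) →₀ MvPolynomial (Fin n) K) (f : MvPolynomial (Fin n) K) :
    MvPolynomial (Fin n) K :=
  D.sum fun α c => c * diffOp α f

/-!
Membership in `I = ⋂ q_j` is membership in every `q_j`, which the operators of `N_j` test
modulo the prime `√q_j`. The multiplier `h_D` vanishes modulo `√q_j` exactly when `D ∉ N_j`
and is nonzero in the domain `R/√q_j` otherwise, so `h_D D • f ∈ √q_j` says precisely that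
`D` passes the test for `q_j` whenever it belongs to `N_j`. Since `√I = ⋂ √q_j` for a finite intersection,
collecting these conditions over all `j` gives the claim.
-/

namespace Ideal

variable {R : Type*} [CommRing R]

theorem radical_iInf_of_finite {κ : Type*} [Finite κ] (q : κ → Ideal R) :
    (⨅ j, q j).radical = ⨅ j, (q j).radical := by
  cases nonempty_fintype κ
  simp_rw [← Finset.inf_univ_eq_iInf]
  exact map_finset_inf radicalInfTopHom _ _

theorem mul_mem_iff_of_mem_iff_not {P : Ideal R} [P.IsPrime] {p : Prop} {h a : R}
    (hP : h ∈ P ↔ ¬p) : h * a ∈ P ↔ (p → a ∈ P) := by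
  refine ⟨fun hha hp => ?_, fun ha => ?_⟩
  · exact (IsPrime.mem_or_mem ‹_› hha).resolve_left (hP.not.mpr (not_not.mpr hp))
  · by_cases hp : p
    · exact mul_mem_left _ _ (ha hp)
    · exact mul_mem_right _ _ (hP.mpr hp)

def IsNoetherianOperators {ι : Type*} (q : Ideal R) (A : ι → R → R) : Prop :=
  ∀ f, f ∈ q ↔ ∀ i, A i f ∈ q.radical

theorem isNoetherianOperators_iInf {κ ι : Type*} [Finite κ] {q : κ → Ideal R}
    (hprim : ∀ j, (q j).IsPrimary) {A : ι → R → R} {mem : ι → κ → Prop}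
    (hA : ∀ j, IsNoetherianOperators (q j) fun i : {i // mem i j} => A i)
    {h : ι → R} (hh : ∀ i j, h i ∈ (q j).radical ↔ ¬mem i j) :
    IsNoetherianOperators (⨅ j, q j) fun i f => h i * A i f := by
  intro f
  have (j : κ) : (q j).radical.IsPrime := isPrime_radical (hprim j)
  simp only [radical_iInf_of_finite, mem_iInf, hA _ f, Subtype.forall,
    mul_mem_iff_of_mem_iff_not (hh _ _)]
  exact forall_comm

end Ideal

theorem noetherian_operators_of_unmixed_general
    (K : Type*) [Field K] (n : ℕ) (r : ℕ)
    (I : Ideal (MvPolynomial (Fin n) K))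
    (q : Fin r → Ideal (MvPolynomial (Fin n) K))
    (hdec : I = ⨅ j, q j)
    (hprim : ∀ j, (q j).IsPrimary)
    {ι : Type*}
    (D : ι → ((Fin n →₀ ℕ) →₀ MvPolynomial (Fin n) K))
    (mem : ι → Fin r → Prop)
    (hNoeth : ∀ j, ∀ f : MvPolynomial (Fin n) K,
      f ∈ q j ↔ ∀ i, mem i j → wAct (D i) f ∈ (q j).radical)
    (h : ι → MvPolynomial (Fin n) K)
    (hh : ∀ i, (∀ j, ¬ mem i j → h i ∈ (q j).radical) ∧
               (∀ j, mem i j → h i ∉ (q j).radical)) :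
    ∀ f : MvPolynomial (Fin n) K,
      f ∈ I ↔ ∀ i, h i * wAct (D i) f ∈ I.radical := by
  subst hdec
  have hA (j : Fin r) :
      Ideal.IsNoetherianOperators (q j) fun i : {i // mem i j} => wAct (D i) := fun f => by
    simpa only [Subtype.forall] using hNoeth j f
  have hh' (i : ι) (j : Fin r) : h i ∈ (q j).radical ↔ ¬mem i j :=
    ⟨fun hin hmem => (hh i).2 j hmem hin, (hh i).1 j⟩
  exact Ideal.isNoetherianOperators_iInf hprim hA hh'

/-- Let `I = q₁ ∩ ⋯ ∩ q_r` be a minimal primary decomposition of an unmixed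
ideal (all `√q_j` minimal over `I` and pairwise incomparable), and for each `j` let `N_j`
be a set of Noetherian operators for `q_j`. The operators in `⋃_j N_j` are indexed by `ι`,
with `mem i j` meaning that the `i`-th operator `D i` belongs to `N_j`. For each operator
`D i` choose `h i ∈ (⋂_{j : D i ∉ N_j} √q_j) \ (⋃_{j : D i ∈ N_j} √q_j)`. Then
`{h_D D : D ∈ ⋃_j N_j}` is a set of Noetherian operators for `I`: for `f ∈ R`,
`f ∈ I ⟺ h i * (D i • f) ∈ √I` for every `i`. -/
theorem noetherian_operators_of_unmixed
    (K : Type*) [Field K] [CharZero K] (n : ℕ) (r : ℕ)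
    (I : Ideal (MvPolynomial (Fin n) K))
    (q : Fin r → Ideal (MvPolynomial (Fin n) K))
    (hdec : I = ⨅ j, q j)
    (hprim : ∀ j, (q j).IsPrimary)
    (hmin : ∀ j, (q j).radical ∈ I.minimalPrimes)
    (hinc : ∀ j k, j ≠ k → ¬ (q j).radical ≤ (q k).radical)
    {ι : Type*}
    (D : ι → ((Fin n →₀ ℕ) →₀ MvPolynomial (Fin n) K))
    (mem : ι → Fin r → Prop)
    (hcover : ∀ i, ∃ j, mem i j)
    (hNoeth : ∀ j, ∀ f : MvPolynomial (Fin n) K,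
      f ∈ q j ↔ ∀ i, mem i j → wAct (D i) f ∈ (q j).radical)
    (h : ι → MvPolynomial (Fin n) K)
    (hh : ∀ i, (∀ j, ¬ mem i j → h i ∈ (q j).radical) ∧
               (∀ j, mem i j → h i ∉ (q j).radical)) :
    ∀ f : MvPolynomial (Fin n) K,
      f ∈ I ↔ ∀ i, h i * wAct (D i) f ∈ I.radical :=
  noetherian_operators_of_unmixed_general K n r I q hdec hprim D mem hNoeth h hh
end
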